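/- arXiv:1006.5523 — 6 statements merged into one kernel-verified Lean document; each statement's English description precedes it below -/
import Mathlib

section
/- For all real numbers y, z ≥ 0 and every real k ≥ 2, one has (y + z)^{k/2} - y^{k/2} - z^{k/2} ≤ 2^{k/2} (y^{(k-1)/2} z^{1/2} + y^{1/2} z^{(k-1)/2}). -/
/-! By symmetry let `z ≤ y`, and write `p = k / 2 ≥ 1`. Convexity of `x ↦ x ^ p` on the
segment `[y, 2 y]`, evaluated at `y + z`, gives `(y + z) ^ p - y ^ p ≤ (2 ^ p - 1) z y ^ (p - 1)`,
and `z ≤ √(y z)` turns the right-hand side into `2 ^ p y ^ (p - 1/2) z ^ (1/2)`; the other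
summand of the bound is nonnegative. -/

open Real

lemma add_rpow_sub_rpow_le_of_le {y z p : ℝ} (hz : 0 ≤ z) (hzy : z ≤ y) (hp : 1 ≤ p) :
    (y + z) ^ p - y ^ p ≤ (2 ^ p - 1) * z * y ^ (p - 1) := by
  rcases (hz.trans hzy).eq_or_lt with rfl | hy
  · obtain rfl : z = 0 := le_antisymm hzy hz
    simp [zero_rpow (by linarith : p ≠ 0)]
  have hty : z / y * y = z := div_mul_cancel₀ z hy.ne'
  have hconv := (convexOn_rpow hp).2 (Set.mem_Ici.2 hy.le)
    (Set.mem_Ici.2 (by linarith : 0 ≤ 2 * y))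
    (sub_nonneg.2 (div_le_one_of_le₀ hzy hy.le)) (div_nonneg hz hy.le) (sub_add_cancel 1 (z / y))
  have hpoint : (1 - z / y) * y + z / y * (2 * y) = y + z := by linear_combination hty
  have hpow : y ^ p = y * y ^ (p - 1) := by
    rw [← rpow_one_add' hy.le (by linarith), add_sub_cancel]
  simp only [smul_eq_mul, hpoint, mul_rpow zero_le_two hy.le] at hconv
  calc (y + z) ^ p - y ^ p ≤ (2 ^ p - 1) * (z / y * y) * y ^ (p - 1) := by
        rw [mul_assoc _ (z / y * y), mul_assoc (z / y), ← hpow]; linarith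
    _ = (2 ^ p - 1) * z * y ^ (p - 1) := by rw [hty]

lemma mul_rpow_le_sqrt_mul_rpow_add_half {y z q : ℝ} (hz : 0 ≤ z) (hzy : z ≤ y)
    (hq : 0 ≤ q) :
    z * y ^ q ≤ y ^ (q + 1 / 2) * z ^ (1 / 2 : ℝ) := by
  have hy := hz.trans hzy
  have hz_sq : z = z ^ (1 / 2 : ℝ) * z ^ (1 / 2 : ℝ) := by
    rw [← rpow_add_of_nonneg hz (by norm_num) (by norm_num)]; norm_num
  calc z * y ^ q = z ^ (1 / 2 : ℝ) * z ^ (1 / 2 : ℝ) * y ^ q := by rw [← hz_sq]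
    _ ≤ z ^ (1 / 2 : ℝ) * y ^ (1 / 2 : ℝ) * y ^ q := by gcongr
    _ = y ^ (q + 1 / 2) * z ^ (1 / 2 : ℝ) := by
        rw [add_comm q, rpow_add_of_nonneg hy (by norm_num) hq]; ring

lemma add_rpow_sub_rpow_sub_rpow_le_of_le {y z p : ℝ} (hz : 0 ≤ z) (hzy : z ≤ y)
    (hp : 1 ≤ p) :
    (y + z) ^ p - y ^ p - z ^ p ≤ 2 ^ p * (y ^ (p - 1 / 2) * z ^ (1 / 2 : ℝ)) := by
  have hsqrt := mul_rpow_le_sqrt_mul_rpow_add_half hz hzy (sub_nonneg.2 hp)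
  rw [show p - 1 + 1 / 2 = p - 1 / 2 by ring] at hsqrt
  have hprod : 0 ≤ z * y ^ (p - 1) := mul_nonneg hz (rpow_nonneg (hz.trans hzy) _)
  calc (y + z) ^ p - y ^ p - z ^ p ≤ (y + z) ^ p - y ^ p := by linarith [rpow_nonneg hz p]
    _ ≤ (2 ^ p - 1) * z * y ^ (p - 1) := add_rpow_sub_rpow_le_of_le hz hzy hp
    _ ≤ 2 ^ p * (z * y ^ (p - 1)) := by linarith
    _ ≤ 2 ^ p * (y ^ (p - 1 / 2) * z ^ (1 / 2 : ℝ)) := by gcongr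

theorem povzner_elementary_power_inequality (y z k : ℝ) (hy : 0 ≤ y) (hz : 0 ≤ z)
    (hk : 2 ≤ k) :
    (y + z) ^ (k / 2) - y ^ (k / 2) - z ^ (k / 2) ≤
      2 ^ (k / 2) * (y ^ ((k - 1) / 2) * z ^ ((1 : ℝ) / 2)
        + y ^ ((1 : ℝ) / 2) * z ^ ((k - 1) / 2)) := by
  have hp : 1 ≤ k / 2 := by linarith
  have h2p : 0 ≤ (2 : ℝ) ^ (k / 2) := rpow_nonneg zero_le_two _
  rw [show (k - 1) / 2 = k / 2 - 1 / 2 by ring, mul_add]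
  rcases le_total z y with hzy | hyz
  · have := add_rpow_sub_rpow_sub_rpow_le_of_le hz hzy hp
    have := mul_nonneg h2p
      (mul_nonneg (rpow_nonneg hy (1 / 2 : ℝ)) (rpow_nonneg hz (k / 2 - 1 / 2)))
    linarith
  · have := add_rpow_sub_rpow_sub_rpow_le_of_le hy hyz hp
    rw [add_comm z y] at this
    have := mul_nonneg h2p
      (mul_nonneg (rpow_nonneg hy (k / 2 - 1 / 2)) (rpow_nonneg hz (1 / 2 : ℝ)))
    linarith
end

section
/- For every β ∈ (0, 2) there exists η ∈ (0, 1) such that for all x ∈ [0, 1/√2], x^β + (1 - x^2)^{β/2} - 1 ≥ η x^β. -/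
/-!
With `a = 1/√2` and `c = a^(2-β) < 1`, take `η = 1 - c`. On `[0, a]` we have
`x² = x^(2-β) x^β ≤ c x^β`, while `(1 - x²)^(β/2) ≥ 1 - x²` because `1 - x² ∈ [0, 1]` and `β/2 ≤ 1`.
Hence `x^β + (1 - x²)^(β/2) - 1 ≥ x^β - x² ≥ (1 - c) x^β`.
-/

open Real

theorem sq_le_rpow_sub_mul_rpow {x a β : ℝ} (hx : 0 ≤ x) (hxa : x ≤ a) (hβ : β ≤ 2) :
    x ^ 2 ≤ a ^ (2 - β) * x ^ β :=
  calc x ^ 2 = x ^ ((2 - β) + β) := by rw [sub_add_cancel]; norm_cast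
    _ = x ^ (2 - β) * x ^ β := rpow_add' hx (by norm_num)
    _ ≤ a ^ (2 - β) * x ^ β := by gcongr

theorem one_div_sqrt_two_lt_one : 1 / √2 < 1 := by
  rw [div_lt_one (by positivity), lt_sqrt zero_le_one]
  norm_num

theorem stretched_exponent_elementary_inequality_general (β : ℝ) (hβ2 : β < 2) :
    ∃ η : ℝ, η ∈ Set.Ioo (0 : ℝ) 1 ∧
      ∀ x ∈ Set.Icc (0 : ℝ) (1 / Real.sqrt 2),
        η * x ^ β ≤ x ^ β + (1 - x ^ 2) ^ (β / 2) - 1 := by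
  have hc0 : 0 < (1 / √2) ^ (2 - β) := by positivity
  have hc1 : (1 / √2) ^ (2 - β) < 1 :=
    rpow_lt_one (by positivity) one_div_sqrt_two_lt_one (by linarith)
  refine ⟨1 - (1 / √2) ^ (2 - β), ⟨by linarith, by linarith⟩, ?_⟩
  rintro x ⟨hx0, hxa⟩
  have hsq : x ^ 2 ≤ (1 / √2) ^ (2 - β) * x ^ β := sq_le_rpow_sub_mul_rpow hx0 hxa hβ2.le
  have hx1 : x ^ 2 ≤ 1 := pow_le_one₀ hx0 (hxa.trans one_div_sqrt_two_lt_one.le)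
  have hpow : 1 - x ^ 2 ≤ (1 - x ^ 2) ^ (β / 2) :=
    self_le_rpow_of_le_one (by linarith) (by linarith [sq_nonneg x]) (by linarith)
  linarith

theorem stretched_exponent_elementary_inequality (β : ℝ) (hβ0 : 0 < β) (hβ2 : β < 2) :
    ∃ η : ℝ, η ∈ Set.Ioo (0 : ℝ) 1 ∧
      ∀ x ∈ Set.Icc (0 : ℝ) (1 / Real.sqrt 2),
        η * x ^ β ≤ x ^ β + (1 - x ^ 2) ^ (β / 2) - 1 :=
  stretched_exponent_elementary_inequality_general β hβ2
end

section
/- Let X(t) ≥ 0 be a C^1 function on [0,1] satisfying X'(t) ≤ -2K Y^{-4/d} X(t)^{1 + 2/d} + 2b X(t) for constants K, b, Y > 0 and integer d ≥ 1. Then for all t ∈ (0, 1], X(t) ≤ max{ (d/(2K Y^{-4/d} t))^{d/2}, e^{2bt} (2b/K)^{d/2} Y^2 }. -/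
/-!
Put `κ = K Y^{-4/d}` and `M = (2b/K)^{d/2} Y^2`, the level at which `κ X^{2/d} = 2b`.
If `X > M` on all of `[0, t]`, half of the damping term absorbs the growth term, so
`X' ≤ -κ X^{1+2/d}`; then `X^{-2/d}` grows at rate at least `2κ/d`, which gives
`X(t) ≤ (d / (2κt))^{d/2}`. Otherwise `X(s) ≤ M` for some `s ≤ t`, and Grönwall's inequality
for `X' ≤ 2bX` on `[s, t]` gives `X(t) ≤ e^{2bt} M`.
-/

open Set Real

lemma le_mul_exp_of_hasDerivAt_le_mul {f f' : ℝ → ℝ} {κ a b : ℝ} (hab : a ≤ b)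
    (hf : ∀ u ∈ Icc a b, HasDerivAt f (f' u) u) (bound : ∀ u ∈ Icc a b, f' u ≤ κ * f u) :
    f b ≤ f a * exp (κ * (b - a)) := by
  have := le_gronwallBound_of_liminf_deriv_right_le (δ := f a) (K := κ) (ε := 0)
    (fun u hu ↦ (hf u hu).continuousAt.continuousWithinAt)
    (fun u hu _ hr ↦ (hf u (Ico_subset_Icc_self hu)).hasDerivWithinAt.liminf_right_slope_le hr)
    le_rfl (fun u hu ↦ by simpa using bound u (Ico_subset_Icc_self hu)) b (right_mem_Icc.2 hab)
  rwa [gronwallBound_ε0] at this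

lemma mul_sub_le_rpow_neg_sub_of_hasDerivAt_le {f f' : ℝ → ℝ} {κ p a b : ℝ} (hp : 0 ≤ p)
    (hab : a ≤ b) (hpos : ∀ u ∈ Icc a b, 0 < f u) (hf : ∀ u ∈ Icc a b, HasDerivAt f (f' u) u)
    (bound : ∀ u ∈ Icc a b, f' u ≤ -κ * f u ^ (1 + p)) :
    p * κ * (b - a) ≤ f b ^ (-p) - f a ^ (-p) := by
  have hg : ∀ u ∈ Icc a b, HasDerivAt (fun v ↦ f v ^ (-p)) (-p * f u ^ (-p - 1) * f' u) u :=
    fun u hu ↦ ((hf u hu).rpow_const (Or.inl (hpos u hu).ne')).congr_deriv (by ring)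
  have hg' : ∀ u ∈ Icc a b, p * κ ≤ -p * f u ^ (-p - 1) * f' u := by
    intro u hu
    have hfu := hpos u hu
    have hcancel : f u ^ (-p - 1) * f u ^ (1 + p) = 1 := by
      rw [← rpow_add hfu, show -p - 1 + (1 + p) = 0 by ring, rpow_zero]
    calc p * κ = -p * f u ^ (-p - 1) * (-κ * f u ^ (1 + p)) := by
          linear_combination (-p * κ) * hcancel
      _ ≤ -p * f u ^ (-p - 1) * f' u :=
          mul_le_mul_of_nonpos_left (bound u hu)
            (mul_nonpos_of_nonpos_of_nonneg (neg_nonpos.2 hp) (rpow_nonneg hfu.le _))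
  exact (convex_Icc a b).mul_sub_le_image_sub_of_le_deriv
    (fun u hu ↦ (hg u hu).continuousAt.continuousWithinAt)
    (fun u hu ↦ (hg u (interior_subset hu)).differentiableAt.differentiableWithinAt)
    (fun u hu ↦ (hg u (interior_subset hu)).deriv ▸ hg' u (interior_subset hu))
    a (left_mem_Icc.2 hab) b (right_mem_Icc.2 hab) hab

lemma le_rpow_of_hasDerivAt_le_neg_mul_rpow {f f' : ℝ → ℝ} {κ p a b : ℝ} (hp : 0 < p)
    (hκ : 0 < κ) (hab : a < b) (hpos : ∀ u ∈ Icc a b, 0 < f u)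
    (hf : ∀ u ∈ Icc a b, HasDerivAt f (f' u) u)
    (bound : ∀ u ∈ Icc a b, f' u ≤ -κ * f u ^ (1 + p)) :
    f b ≤ (p * κ * (b - a)) ^ (-p⁻¹) := by
  have hfb := hpos b (right_mem_Icc.2 hab.le)
  have hgrowth : p * κ * (b - a) ≤ f b ^ (-p) := by
    have := mul_sub_le_rpow_neg_sub_of_hasDerivAt_le hp.le hab.le hpos hf bound
    linarith [rpow_nonneg (hpos a (left_mem_Icc.2 hab.le)).le (-p)]
  calc f b = (f b ^ (-p)) ^ (-p⁻¹) := by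
        rw [← rpow_mul hfb.le, neg_mul_neg, mul_inv_cancel₀ hp.ne', rpow_one]
    _ ≤ (p * κ * (b - a)) ^ (-p⁻¹) :=
        rpow_le_rpow_of_nonpos (by have := sub_pos.2 hab; positivity) hgrowth
          (neg_nonpos.2 (inv_nonneg.2 hp.le))

lemma rpow_mul_le_rpow_one_add {M x p : ℝ} (hM : 0 ≤ M) (hMx : M ≤ x) (hp : 0 ≤ p) :
    M ^ p * x ≤ x ^ (1 + p) := by
  have hx := hM.trans hMx
  rw [add_comm, rpow_add_one' hx (by positivity)]
  gcongr

lemma mul_rpow_mul_sq_rpow_inv {A Y q : ℝ} (hA : 0 ≤ A) (hY : 0 < Y) (hq : q ≠ 0) :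
    (A ^ q * Y ^ 2) ^ q⁻¹ = A * Y ^ (2 / q) := by
  rw [mul_rpow (rpow_nonneg hA q) (by positivity), ← rpow_mul hA, mul_inv_cancel₀ hq, rpow_one,
    ← rpow_natCast, ← rpow_mul hY.le, div_eq_mul_inv]
  norm_num

theorem nash_differential_inequality (d : ℕ) (hd : 1 ≤ d)
    (K b Y : ℝ) (hK : 0 < K) (hb : 0 < b) (hY : 0 < Y)
    (X X' : ℝ → ℝ)
    (hX : ∀ t ∈ Set.Icc (0:ℝ) 1, HasDerivAt X (X' t) t)
    (hXpos : ∀ t ∈ Set.Icc (0:ℝ) 1, 0 ≤ X t)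
    (hineq : ∀ t ∈ Set.Icc (0:ℝ) 1,
      X' t ≤ -2 * K * Y ^ (-(4:ℝ) / d) * X t ^ (1 + 2 / (d:ℝ)) + 2 * b * X t) :
    ∀ t ∈ Set.Ioc (0:ℝ) 1,
      X t ≤ max (((d : ℝ) / (2 * K * Y ^ (-(4:ℝ) / d) * t)) ^ ((d:ℝ) / 2))
        (Real.exp (2 * b * t) * (2 * b / K) ^ ((d:ℝ) / 2) * Y ^ 2) := by
  intro t ⟨ht0, ht1⟩
  have hd0 : (0 : ℝ) < d := by exact_mod_cast hd
  set κ := K * Y ^ (-(4:ℝ) / d) with hκ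
  set M := (2 * b / K) ^ ((d:ℝ) / 2) * Y ^ 2
  have hM : 0 < M := by positivity
  have hκM : κ * M ^ ((2:ℝ) / d) = 2 * b := by
    rw [show (2:ℝ) / d = ((d:ℝ) / 2)⁻¹ by rw [inv_div],
      mul_rpow_mul_sq_rpow_inv (by positivity) hY (by positivity),
      show (2:ℝ) / ((d:ℝ) / 2) = 4 / d by field_simp; norm_num, hκ, neg_div, rpow_neg hY.le]
    field_simp
  by_cases habove : ∀ u ∈ Icc 0 t, M < X u
  · have hsub : Icc 0 t ⊆ Icc (0 : ℝ) 1 := Icc_subset_Icc_right ht1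
    have hdecay : ∀ u ∈ Icc 0 t, X' u ≤ -κ * X u ^ (1 + 2 / (d:ℝ)) := by
      intro u hu
      have habsorb : 2 * b * X u ≤ κ * X u ^ (1 + 2 / (d:ℝ)) := by
        rw [← hκM, mul_assoc]
        exact mul_le_mul_of_nonneg_left
          (rpow_mul_le_rpow_one_add hM.le (habove u hu).le (by positivity)) (by positivity)
      linarith [hineq u (hsub hu)]
    refine le_max_of_le_left ((le_rpow_of_hasDerivAt_le_neg_mul_rpow (by positivity)
      (by positivity) ht0 (fun u hu ↦ hM.trans (habove u hu)) (fun u hu ↦ hX u (hsub hu))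
      hdecay).trans_eq ?_)
    rw [sub_zero, inv_div, rpow_neg (by positivity), ← inv_rpow (by positivity), hκ]
    congr 1
    field_simp
  · push Not at habove
    obtain ⟨s, hs, hXs⟩ := habove
    have hsub : Icc s t ⊆ Icc (0 : ℝ) 1 := Icc_subset_Icc hs.1 ht1
    have hgrowth : ∀ u ∈ Icc s t, X' u ≤ 2 * b * X u := by
      intro u hu
      have : 0 ≤ κ * X u ^ (1 + 2 / (d:ℝ)) := by have := hXpos u (hsub hu); positivity
      linarith [hineq u (hsub hu)]
    refine le_max_of_le_right ?_
    calc X t ≤ X s * exp (2 * b * (t - s)) :=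
          le_mul_exp_of_hasDerivAt_le_mul hs.2 (fun u hu ↦ hX u (hsub hu)) hgrowth
      _ ≤ M * exp (2 * b * t) := by gcongr; linarith [hs.1]
      _ = _ := by ring
end

section
/- Let φ(v) = |v|^γ for |v| large with γ ≥ 1, and let m(v) = exp(κ|v|^β) with κ > 0 and 2 - γ ≤ β < γ, p ∈ [1,2]. Define ψ_{m,p} = (p-1)|∇m|^2/m^2 + Δm/m + (1 - 1/p) Δφ - ∇φ · ∇m/m (for F = ∇φ). Then as |v| → ∞, ψ_{m,p}(v) ≈ p κ^2 β^2 |v|^{2β-2} - κβγ |v|^{β+γ-2}; in particular if β + γ > 2 and β < γ then limsup_{|v|→∞} ψ_{m,p}(v) = -∞, and if β = 2 - γ then limsup_{|v|→∞} ψ_{m,p}(v) = -κβγ. -/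
/-! `m = F ∘ ‖·‖²` with `F s = exp (κ s^(β/2))`, and `φ = ‖·‖^γ` near every `v` with `‖v‖ > 1`.
Since `‖v + t eᵢ‖²` is quadratic in `t`, the chain rule gives `∇(F ∘ ‖·‖²) v = 2 F'(‖v‖²) v` and
`Δ(F ∘ ‖·‖²) v = 4 ‖v‖² F''(‖v‖²) + 2 d F'(‖v‖²)`, so for `‖v‖ > 1` the defect `ψ v` is an explicit
combination of powers of `r = ‖v‖`. As `0 < β < γ`, the leading power is `r^(β+γ-2)`, with
coefficient `-κβγ`; its exponent is positive when `2 - γ < β` and zero when `β = 2 - γ`. -/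

open Real Filter

/-- The Laplacian of a scalar function on Euclidean space, defined as the sum of
second derivatives along the coordinate directions. -/
noncomputable def euclideanLaplacian {d : ℕ} (f : EuclideanSpace ℝ (Fin d) → ℝ)
    (v : EuclideanSpace ℝ (Fin d)) : ℝ :=
  ∑ i : Fin d, iteratedDeriv 2 (fun t : ℝ => f (v + t • EuclideanSpace.single i 1)) 0

open Topology

lemma iteratedDeriv_two_congr_of_eventuallyEq {f g : ℝ → ℝ} {x : ℝ} (h : f =ᶠ[𝓝 x] g) :
    iteratedDeriv 2 f x = iteratedDeriv 2 g x := by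
  simp only [iteratedDeriv_succ, iteratedDeriv_zero]
  exact h.deriv.deriv_eq

lemma iteratedDeriv_two_comp_quadratic {F F' F'' : ℝ → ℝ} {a : ℝ} (ha : 0 < a) (b : ℝ)
    (hF : ∀ s, 0 < s → HasDerivAt F (F' s) s) (hF' : ∀ s, 0 < s → HasDerivAt F' (F'' s) s) :
    iteratedDeriv 2 (fun t => F (a + 2 * b * t + t ^ 2)) 0 = 4 * b ^ 2 * F'' a + 2 * F' a := by
  set q : ℝ → ℝ := fun t => a + 2 * b * t + t ^ 2
  have hq : ∀ t, HasDerivAt q (2 * b + 2 * t) t := fun t =>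
    ((((hasDerivAt_id t).const_mul (2 * b)).const_add a).add (hasDerivAt_pow 2 t)).congr_deriv
      (by simp)
  have hq0 : q 0 = a := by simp [q]
  have hq_pos : ∀ᶠ t in 𝓝 0, 0 < q t := (hq 0).continuousAt.eventually (lt_mem_nhds (hq0 ▸ ha))
  have hderiv : deriv (fun t => F (q t)) =ᶠ[𝓝 0] fun t => F' (q t) * (2 * b + 2 * t) :=
    hq_pos.mono fun t ht => ((hF _ ht).comp t (hq t)).deriv
  have h2 : HasDerivAt (fun t => F' (q t) * (2 * b + 2 * t))
      (F'' a * (2 * b + 2 * 0) * (2 * b + 2 * 0) + F' a * 2) 0 := by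
    rw [← hq0]
    exact ((hF' _ hq_pos.self_of_nhds).comp 0 (hq 0)).mul
      (by simpa using ((hasDerivAt_id (0 : ℝ)).const_mul 2).const_add (2 * b))
  simp only [iteratedDeriv_succ, iteratedDeriv_zero]
  rw [hderiv.deriv_eq, h2.deriv]
  ring

section

variable {d : ℕ}

lemma norm_add_smul_single_sq (v : EuclideanSpace ℝ (Fin d)) (i : Fin d) (t : ℝ) :
    ‖v + t • EuclideanSpace.single i (1 : ℝ)‖ ^ 2 = ‖v‖ ^ 2 + 2 * v i * t + t ^ 2 := by
  simp only [norm_add_sq_real, real_inner_smul_right, EuclideanSpace.inner_single_right,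
    RCLike.conj_to_real, one_mul, norm_smul, norm_eq_abs, PiLp.norm_single, norm_one, mul_one,
    sq_abs]
  ring

lemma euclideanLaplacian_congr_of_eventuallyEq {f g : EuclideanSpace ℝ (Fin d) → ℝ}
    {v : EuclideanSpace ℝ (Fin d)} (h : f =ᶠ[𝓝 v] g) :
    euclideanLaplacian f v = euclideanLaplacian g v := by
  refine Finset.sum_congr rfl fun i _ => iteratedDeriv_two_congr_of_eventuallyEq ?_
  have hline : Continuous fun t : ℝ => v + t • EuclideanSpace.single i (1 : ℝ) := by fun_prop
  exact (hline.tendsto' 0 v (by simp)).eventually h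

lemma hasGradientAt_comp_norm_sq {F : ℝ → ℝ} {F' : ℝ} {v : EuclideanSpace ℝ (Fin d)}
    (hF : HasDerivAt F F' (‖v‖ ^ 2)) :
    HasGradientAt (fun w => F (‖w‖ ^ 2)) ((2 * F') • v) v := by
  rw [hasGradientAt_iff_hasFDerivAt]
  refine (hF.comp_hasFDerivAt v (hasStrictFDerivAt_norm_sq v).hasFDerivAt).congr_fderiv ?_
  ext w
  simp only [_root_.smul_apply, coe_innerSL_apply, nsmul_eq_mul, Nat.cast_ofNat,
    smul_eq_mul, map_smul, InnerProductSpace.toDual_apply_apply]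
  ring

lemma euclideanLaplacian_comp_norm_sq {F F' F'' : ℝ → ℝ} {v : EuclideanSpace ℝ (Fin d)}
    (hv : v ≠ 0) (hF : ∀ s, 0 < s → HasDerivAt F (F' s) s)
    (hF' : ∀ s, 0 < s → HasDerivAt F' (F'' s) s) :
    euclideanLaplacian (fun w => F (‖w‖ ^ 2)) v
      = 4 * ‖v‖ ^ 2 * F'' (‖v‖ ^ 2) + 2 * d * F' (‖v‖ ^ 2) := by
  have hs : 0 < ‖v‖ ^ 2 := by positivity
  have hcoord : ∑ i, v i ^ 2 = ‖v‖ ^ 2 := by simp [EuclideanSpace.real_norm_sq_eq]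
  simp only [euclideanLaplacian, norm_add_smul_single_sq,
    iteratedDeriv_two_comp_quadratic hs _ hF hF', Finset.sum_add_distrib, ← Finset.sum_mul,
    ← Finset.mul_sum, hcoord, Finset.sum_const, Finset.card_univ, Fintype.card_fin, nsmul_eq_mul]
  ring

lemma sq_rpow_of_nonneg {r : ℝ} (hr : 0 ≤ r) (x : ℝ) : (r ^ 2) ^ x = r ^ (2 * x) := by
  rw [← Real.rpow_natCast_mul hr, Nat.cast_ofNat]

lemma rpow_sub_two_mul_sq {r : ℝ} (hr : r ≠ 0) (x : ℝ) : r ^ (x - 2) * r ^ 2 = r ^ x := by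
  rw [← Nat.cast_ofNat, ← Real.rpow_add_natCast hr, sub_add_cancel]

lemma norm_rpow_eq_comp_norm_sq (c : ℝ) :
    (fun w : EuclideanSpace ℝ (Fin d) => ‖w‖ ^ c) = fun w => (‖w‖ ^ 2) ^ (c / 2) := by
  ext w
  rw [sq_rpow_of_nonneg (norm_nonneg w), mul_div_cancel₀ c two_ne_zero]

lemma gradient_norm_rpow (c : ℝ) {v : EuclideanSpace ℝ (Fin d)} (hv : v ≠ 0) :
    gradient (fun w => ‖w‖ ^ c) v = (c * ‖v‖ ^ (c - 2)) • v := by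
  have hs : 0 < ‖v‖ ^ 2 := by positivity
  rw [norm_rpow_eq_comp_norm_sq,
    (hasGradientAt_comp_norm_sq (Real.hasDerivAt_rpow_const (Or.inl hs.ne'))).gradient,
    sq_rpow_of_nonneg (norm_nonneg v)]
  congr 1
  ring_nf

lemma euclideanLaplacian_norm_rpow (c : ℝ) {v : EuclideanSpace ℝ (Fin d)} (hv : v ≠ 0) :
    euclideanLaplacian (fun w => ‖w‖ ^ c) v = c * (c + d - 2) * ‖v‖ ^ (c - 2) := by
  have hF' : ∀ s : ℝ, 0 < s → HasDerivAt (fun s => c / 2 * s ^ (c / 2 - 1))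
      (c / 2 * ((c / 2 - 1) * s ^ (c / 2 - 1 - 1))) s :=
    fun s hs => (Real.hasDerivAt_rpow_const (Or.inl hs.ne')).const_mul _
  rw [norm_rpow_eq_comp_norm_sq, euclideanLaplacian_comp_norm_sq hv
    (fun s hs => Real.hasDerivAt_rpow_const (Or.inl hs.ne')) hF']
  simp only [sq_rpow_of_nonneg (norm_nonneg v)]
  rw [show 2 * (c / 2 - 1) = c - 2 by ring, show 2 * (c / 2 - 1 - 1) = c - 2 - 2 by ring,
    ← rpow_sub_two_mul_sq (norm_ne_zero_iff.mpr hv) (c - 2)]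
  ring

lemma hasDerivAt_exp_mul_rpow (κ c : ℝ) {s : ℝ} (hs : 0 < s) :
    HasDerivAt (fun s => Real.exp (κ * s ^ c)) (Real.exp (κ * s ^ c) * (κ * (c * s ^ (c - 1)))) s :=
  (Real.hasDerivAt_exp _).comp s ((Real.hasDerivAt_rpow_const (Or.inl hs.ne')).const_mul κ)

lemma exp_mul_norm_rpow_eq_comp_norm_sq (κ β : ℝ) :
    (fun w : EuclideanSpace ℝ (Fin d) => Real.exp (κ * ‖w‖ ^ β))
      = fun w => Real.exp (κ * (‖w‖ ^ 2) ^ (β / 2)) := by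
  ext w
  rw [sq_rpow_of_nonneg (norm_nonneg w), mul_div_cancel₀ β two_ne_zero]

lemma gradient_exp_mul_norm_rpow (κ β : ℝ) {v : EuclideanSpace ℝ (Fin d)} (hv : v ≠ 0) :
    gradient (fun w => Real.exp (κ * ‖w‖ ^ β)) v
      = (κ * β * ‖v‖ ^ (β - 2) * Real.exp (κ * ‖v‖ ^ β)) • v := by
  have hs : 0 < ‖v‖ ^ 2 := by positivity
  rw [exp_mul_norm_rpow_eq_comp_norm_sq,
    (hasGradientAt_comp_norm_sq (hasDerivAt_exp_mul_rpow κ (β / 2) hs)).gradient]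
  simp only [sq_rpow_of_nonneg (norm_nonneg v)]
  congr 1
  ring_nf

lemma euclideanLaplacian_exp_mul_norm_rpow (κ β : ℝ) {v : EuclideanSpace ℝ (Fin d)} (hv : v ≠ 0) :
    euclideanLaplacian (fun w => Real.exp (κ * ‖w‖ ^ β)) v
      = (κ ^ 2 * β ^ 2 * ‖v‖ ^ (2 * β - 2) + κ * β * (β + d - 2) * ‖v‖ ^ (β - 2))
        * Real.exp (κ * ‖v‖ ^ β) := by
  have hF' : ∀ s : ℝ, 0 < s → HasDerivAt
      (fun s => Real.exp (κ * s ^ (β / 2)) * (κ * (β / 2 * s ^ (β / 2 - 1))))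
      (Real.exp (κ * s ^ (β / 2)) * (κ * (β / 2 * s ^ (β / 2 - 1)))
          * (κ * (β / 2 * s ^ (β / 2 - 1)))
        + Real.exp (κ * s ^ (β / 2)) * (κ * (β / 2 * ((β / 2 - 1) * s ^ (β / 2 - 1 - 1))))) s :=
    fun s hs => (hasDerivAt_exp_mul_rpow κ (β / 2) hs).mul
      (((Real.hasDerivAt_rpow_const (Or.inl hs.ne')).const_mul _).const_mul _)
  have hpos : 0 < ‖v‖ := norm_pos_iff.mpr hv
  rw [exp_mul_norm_rpow_eq_comp_norm_sq, euclideanLaplacian_comp_norm_sq hv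
    (fun s hs => hasDerivAt_exp_mul_rpow κ (β / 2) hs) hF']
  simp only [sq_rpow_of_nonneg (norm_nonneg v)]
  rw [show 2 * (β / 2) = β by ring, show 2 * (β / 2 - 1) = β - 2 by ring,
    show 2 * (β / 2 - 1 - 1) = β - 2 - 2 by ring, show 2 * β - 2 = (β - 2) + (β - 2) + 2 by ring,
    Real.rpow_add hpos, Real.rpow_add hpos, Real.rpow_two, ← rpow_sub_two_mul_sq hpos.ne' (β - 2)]
  ring

end

noncomputable def radialDefectWeight (d : ℕ) (p κ β γ r : ℝ) : ℝ :=
  p * κ ^ 2 * β ^ 2 * r ^ (2 * β - 2) + κ * β * (β + d - 2) * r ^ (β - 2)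
    + (1 - 1 / p) * γ * (γ + d - 2) * r ^ (γ - 2) - κ * β * γ * r ^ (β + γ - 2)

lemma defectWeight_eq_radialDefectWeight {d : ℕ} (p κ β γ : ℝ)
    {φ m : EuclideanSpace ℝ (Fin d) → ℝ} (hm : ∀ w, m w = Real.exp (κ * ‖w‖ ^ β))
    {v : EuclideanSpace ℝ (Fin d)} (hv : v ≠ 0) (hφ : φ =ᶠ[𝓝 v] fun w => ‖w‖ ^ γ) :
    (p - 1) * ‖gradient m v‖ ^ 2 / (m v) ^ 2 + euclideanLaplacian m v / m v
        + (1 - 1 / p) * euclideanLaplacian φ v - (inner ℝ (gradient φ v) (gradient m v) : ℝ) / m v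
      = radialDefectWeight d p κ β γ ‖v‖ := by
  obtain rfl : m = fun w => Real.exp (κ * ‖w‖ ^ β) := funext hm
  have hr : 0 < ‖v‖ := norm_pos_iff.mpr hv
  rw [gradient_exp_mul_norm_rpow κ β hv, euclideanLaplacian_exp_mul_norm_rpow κ β hv,
    hφ.gradient_eq, gradient_norm_rpow γ hv, euclideanLaplacian_congr_of_eventuallyEq hφ,
    euclideanLaplacian_norm_rpow γ hv, norm_smul, Real.norm_eq_abs, mul_pow, sq_abs,
    real_inner_smul_left, real_inner_smul_right, real_inner_self_eq_norm_sq, radialDefectWeight,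
    show 2 * β - 2 = (β - 2) + (β - 2) + 2 by ring, show β + γ - 2 = (β - 2) + (γ - 2) + 2 by ring,
    Real.rpow_add hr, Real.rpow_add hr, Real.rpow_add hr, Real.rpow_add hr, Real.rpow_two]
  field_simp
  ring

lemma tendsto_radialDefectWeight_div_rpow (d : ℕ) (p κ : ℝ) {β γ : ℝ} (hβ : 0 < β)
    (hβγ : β < γ) :
    Tendsto (fun r => radialDefectWeight d p κ β γ r / r ^ (β + γ - 2)) atTop
      (𝓝 (-(κ * β * γ))) := by
  have hlim : Tendsto (fun r : ℝ => p * κ ^ 2 * β ^ 2 * r ^ (-(γ - β))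
      + κ * β * (β + d - 2) * r ^ (-γ) + (1 - 1 / p) * γ * (γ + d - 2) * r ^ (-β) - κ * β * γ)
      atTop (𝓝 (p * κ ^ 2 * β ^ 2 * 0 + κ * β * (β + d - 2) * 0
        + (1 - 1 / p) * γ * (γ + d - 2) * 0 - κ * β * γ)) :=
    ((((tendsto_rpow_neg_atTop (by linarith)).const_mul _).add
      ((tendsto_rpow_neg_atTop (by linarith)).const_mul _)).add
      ((tendsto_rpow_neg_atTop hβ).const_mul _)).sub_const _
  simp only [mul_zero, add_zero, zero_sub] at hlim
  refine hlim.congr' ?_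
  filter_upwards [eventually_gt_atTop 0] with r hr
  rw [eq_div_iff (Real.rpow_pos_of_pos hr _).ne', radialDefectWeight,
    show 2 * β - 2 = -(γ - β) + (β + γ - 2) by ring, show β - 2 = -γ + (β + γ - 2) by ring,
    show γ - 2 = -β + (β + γ - 2) by ring, Real.rpow_add hr, Real.rpow_add hr, Real.rpow_add hr]
  ring

lemma tendsto_radialDefectWeight_atBot (d : ℕ) (p : ℝ) {κ β γ : ℝ} (hκ : 0 < κ) (hβ : 0 < β)
    (hβγ : β < γ) (h : 2 < β + γ) :
    Tendsto (radialDefectWeight d p κ β γ) atTop atBot := by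
  have hneg : -(κ * β * γ) < 0 := neg_lt_zero.mpr (by have := hβ.trans hβγ; positivity)
  refine ((tendsto_rpow_atTop (show 0 < β + γ - 2 by linarith)).atTop_mul_neg hneg
    (tendsto_radialDefectWeight_div_rpow d p κ hβ hβγ)).congr' ?_
  filter_upwards [eventually_gt_atTop 0] with r hr
  exact mul_div_cancel₀ _ (Real.rpow_pos_of_pos hr _).ne'

lemma tendsto_radialDefectWeight_of_add_eq_two (d : ℕ) (p κ : ℝ) {β γ : ℝ} (hβ : 0 < β)
    (hβγ : β < γ) (h : β + γ = 2) :
    Tendsto (radialDefectWeight d p κ β γ) atTop (𝓝 (-(κ * β * γ))) := by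
  simpa [h] using tendsto_radialDefectWeight_div_rpow d p κ hβ hβγ

theorem fokker_planck_defect_weight_asymptotics_general (d : ℕ) (hd : 0 < d)
    (γ κ β p : ℝ) (hκ : 0 < κ) (hβ0 : 0 < β)
    (hβu : β < γ)
    (φ : EuclideanSpace ℝ (Fin d) → ℝ)
    (hφ : ∀ v : EuclideanSpace ℝ (Fin d), 1 ≤ ‖v‖ → φ v = ‖v‖ ^ γ)
    (m : EuclideanSpace ℝ (Fin d) → ℝ)
    (hm : ∀ v, m v = Real.exp (κ * ‖v‖ ^ β))
    (ψ : EuclideanSpace ℝ (Fin d) → ℝ)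
    (hψ : ∀ v, ψ v =
        (p - 1) * ‖gradient m v‖ ^ 2 / (m v) ^ 2 + euclideanLaplacian m v / m v
          + (1 - 1 / p) * euclideanLaplacian φ v
          - (inner ℝ (gradient φ v) (gradient m v) : ℝ) / m v) :
    (2 - γ < β →
      Tendsto ψ (Bornology.cobounded (EuclideanSpace ℝ (Fin d))) atBot) ∧
    (β = 2 - γ →
      Filter.limsup ψ (Bornology.cobounded (EuclideanSpace ℝ (Fin d)))
        = -(κ * β * γ)) := by
  have hradial : ψ =ᶠ[Bornology.cobounded _] fun v => radialDefectWeight d p κ β γ ‖v‖ := by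
    filter_upwards [tendsto_norm_cobounded_atTop.eventually (eventually_gt_atTop 1)] with v hv
    have hφv : φ =ᶠ[𝓝 v] fun w => ‖w‖ ^ γ :=
      (continuous_norm.continuousAt.eventually (lt_mem_nhds hv)).mono fun w hw => hφ w hw.le
    rw [hψ, defectWeight_eq_radialDefectWeight p κ β γ hm (norm_pos_iff.mp (one_pos.trans hv)) hφv]
  refine ⟨fun h => ?_, fun h => ?_⟩
  · exact ((tendsto_radialDefectWeight_atBot d p hκ hβ0 hβu (by linarith)).comp
      tendsto_norm_cobounded_atTop).congr' hradial.symm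
  · have : NeZero d := ⟨hd.ne'⟩
    exact (((tendsto_radialDefectWeight_of_add_eq_two d p κ hβ0 hβu (by linarith)).comp
      tendsto_norm_cobounded_atTop).congr' hradial.symm).limsup_eq

theorem fokker_planck_defect_weight_asymptotics (d : ℕ) (hd : 0 < d)
    (γ κ β p : ℝ) (hγ : 1 ≤ γ) (hκ : 0 < κ) (hβ0 : 0 < β)
    (hβl : 2 - γ ≤ β) (hβu : β < γ) (hp1 : 1 ≤ p) (hp2 : p ≤ 2)
    (φ : EuclideanSpace ℝ (Fin d) → ℝ)
    (hφ : ∀ v : EuclideanSpace ℝ (Fin d), 1 ≤ ‖v‖ → φ v = ‖v‖ ^ γ)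
    (m : EuclideanSpace ℝ (Fin d) → ℝ)
    (hm : ∀ v, m v = Real.exp (κ * ‖v‖ ^ β))
    (ψ : EuclideanSpace ℝ (Fin d) → ℝ)
    (hψ : ∀ v, ψ v =
        (p - 1) * ‖gradient m v‖ ^ 2 / (m v) ^ 2 + euclideanLaplacian m v / m v
          + (1 - 1 / p) * euclideanLaplacian φ v
          - (inner ℝ (gradient φ v) (gradient m v) : ℝ) / m v) :
    (2 - γ < β →
      Tendsto ψ (Bornology.cobounded (EuclideanSpace ℝ (Fin d))) atBot) ∧
    (β = 2 - γ →
      Filter.limsup ψ (Bornology.cobounded (EuclideanSpace ℝ (Fin d)))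
        = -(κ * β * γ)) :=
  fokker_planck_defect_weight_asymptotics_general d hd γ κ β p hκ hβ0 hβu φ hφ m hm ψ hψ
end

section
/- Let E ⊂ 𝓔 be Banach spaces with E dense in 𝓔 and continuous embedding, and let 𝓛 = 𝓐 + 𝓑 be a closed operator on 𝓔 with restriction L to E. Assume: (i) (𝓑 - z)^{-1} exists and is uniformly bounded on 𝓑(𝓔) for Re z > a, with norm tending to 0 as Re z → ∞; (ii) 𝓐 ∈ 𝓑(𝓔); (iii) for some n ≥ 1, (𝓐(𝓑 - z)^{-1})^n is uniformly bounded from 𝓔 to E for Re z > a; (iv) (L - z)^{-1} exists and is bounded on E for Re z > a. Then for every z with Re z > a, (𝓛 - z) is invertible on 𝓔 and (𝓛 - z)^{-1} = Σ_{ℓ=0}^{n-1} (-1)^ℓ (𝓑 - z)^{-1}(𝓐(𝓑 - z)^{-1})^ℓ + (-1)^n (L - z)^{-1}(𝓐(𝓑 - z)^{-1})^n. -/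
/-!
Writing `𝓛 - z = 𝓐 + (𝓑 - z)` and telescoping shows that the right-hand side `S z` is a right
inverse of `𝓛 - z` for every `z` in the half-plane `Re z > a`; only invertibility of `𝓛 - z`
remains. For large `Re z` it holds because `‖𝓐 (𝓑 - z)⁻¹‖ < 1`. The set of invertible points is
open, and it is relatively closed in the half-plane because `S` is locally bounded there (the
resolvents of `𝓑` and `L` are continuous, the factor through `E` is uniformly bounded): near an
invertible `w` with `‖S w‖ ≤ K`, every point at distance `< 1 / K` is invertible. Connectedness of
the half-plane finishes the proof.
-/

open Filter Topology

theorem add_mul_sum_neg_one_pow_smul {R A : Type*} [CommRing R] [Ring A] [Algebra R A]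
    {a b r : A} (hbr : b * r = 1) (n : ℕ) :
    (a + b) * ∑ ℓ ∈ Finset.range n, (-1 : R) ^ ℓ • (r * (a * r) ^ ℓ)
      = 1 - (-1 : R) ^ n • (a * r) ^ n := by
  induction n with
  | zero => simp
  | succ n ih =>
    have hstep : (a + b) * (r * (a * r) ^ n) = (a * r) ^ (n + 1) + (a * r) ^ n := by
      rw [add_mul, ← mul_assoc, ← mul_assoc, hbr, one_mul, ← pow_succ']
    rw [Finset.sum_range_succ, mul_add, ih, mul_smul_comm, hstep, pow_succ (-1 : R), smul_add,
      mul_neg_one, neg_smul]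
    abel

section BanachRing

variable {A : Type*} [NormedRing A] [CompleteSpace A]

theorem isUnit_add_of_norm_mul_lt_one {a b r : A} (hbr : b * r = 1) (hrb : r * b = 1)
    (h : ‖a * r‖ < 1) : IsUnit (a + b) := by
  have hfac : a + b = (1 - -(a * r)) * b := by
    rw [sub_neg_eq_add, add_mul, one_mul, mul_assoc, hrb, mul_one, add_comm]
  rw [hfac]
  exact (isUnit_one_sub_of_norm_lt_one (by rwa [norm_neg])).mul ⟨⟨b, r, hbr, hrb⟩, rfl⟩

theorem isUnit_of_isUnit_of_norm_mul_sub_lt_one {x y s : A} (hx : IsUnit x) (hxs : x * s = 1)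
    (h : ‖s * (x - y)‖ < 1) : IsUnit y := by
  have hfac : y = x * (1 - s * (x - y)) := by
    rw [mul_sub, mul_one, ← mul_assoc, hxs, one_mul, sub_sub_cancel]
  rw [hfac]
  exact hx.mul (isUnit_one_sub_of_norm_lt_one h)

theorem continuousAt_of_eventually_inverse {X : Type*} [TopologicalSpace X] {f g : X → A}
    {x : X} (hf : ContinuousAt f x) (hfg : ∀ᶠ y in 𝓝 x, f y * g y = 1 ∧ g y * f y = 1) :
    ContinuousAt g x := by
  have hinv : (fun y ↦ Ring.inverse (f y)) =ᶠ[𝓝 x] g := hfg.mono fun y hy ↦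
    Ring.inverse_unit ⟨f y, g y, hy.1, hy.2⟩
  have hx := hfg.self_of_nhds
  exact ((NormedRing.inverse_continuousAt (⟨f x, g x, hx.1, hx.2⟩ : Aˣ)).comp (f := f) hf).congr
    hinv

theorem IsPreconnected.isUnit_of_locally_bounded_right_inverse {X : Type*} [TopologicalSpace X]
    {Ω : Set X} (hΩ : IsPreconnected Ω) (hΩo : IsOpen Ω) {f s : X → A} (hf : Continuous f)
    (hfs : ∀ x ∈ Ω, f x * s x = 1) (hs : ∀ x ∈ Ω, ∃ K, ∀ᶠ y in 𝓝 x, ‖s y‖ ≤ K)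
    (h₀ : ∃ x ∈ Ω, IsUnit (f x)) : ∀ x ∈ Ω, IsUnit (f x) := by
  obtain ⟨x₀, hx₀, hu₀⟩ := h₀
  refine fun x hx ↦ hΩ.subset_of_closure_inter_subset (Units.isOpen.preimage hf)
    ⟨x₀, hx₀, hu₀⟩ ?_ hx
  rintro x ⟨hxcl, hxΩ⟩
  obtain ⟨K, hK⟩ := hs x hxΩ
  have hK0 : 0 ≤ K := (norm_nonneg _).trans hK.self_of_nhds
  have hnear : ∀ᶠ y in 𝓝 x, ‖f y - f x‖ < (K + 1)⁻¹ := by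
    simpa only [← dist_eq_norm] using
      Metric.tendsto_nhds.mp hf.continuousAt _ (inv_pos.mpr (by linarith))
  obtain ⟨y, hyU, hyK, hyΩ, hyx⟩ := ((mem_closure_iff_frequently.mp hxcl).and_eventually
    (hK.and ((hΩo.eventually_mem hxΩ).and hnear))).exists
  refine isUnit_of_isUnit_of_norm_mul_sub_lt_one hyU (hfs y hyΩ) ?_
  calc ‖s y * (f y - f x)‖ ≤ K * (K + 1)⁻¹ :=
        (norm_mul_le _ _).trans (mul_le_mul hyK hyx.le (norm_nonneg _) hK0)
    _ < 1 := by rw [mul_inv_lt_iff₀ (by linarith)]; linarith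

theorem exists_lt_re_isUnit_add (a : A) {b r : ℂ → A} (c : ℝ)
    (hbr : ∀ z : ℂ, c < z.re → b z * r z = 1 ∧ r z * b z = 1)
    (hr : Tendsto (fun z ↦ ‖r z‖) (comap Complex.re atTop) (𝓝 0)) :
    ∃ z : ℂ, c < z.re ∧ IsUnit (a + b z) := by
  have : (comap Complex.re atTop).NeBot := atTop_neBot.comap_of_surj Complex.re_surjective
  have hsmall : ∀ᶠ z in comap Complex.re atTop, ‖a‖ * ‖r z‖ < 1 := by
    simpa using (hr.const_mul ‖a‖).eventually_lt_const (by simp : ‖a‖ * 0 < 1)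
  have hre : ∀ᶠ z in comap Complex.re atTop, c < z.re :=
    tendsto_comap.eventually (eventually_gt_atTop c)
  obtain ⟨z, hz, hzc⟩ := (hsmall.and hre).exists
  exact ⟨z, hzc, isUnit_add_of_norm_mul_lt_one (hbr z hzc).1 (hbr z hzc).2
    ((norm_mul_le _ _).trans_lt hz)⟩

end BanachRing

section Factorization

variable {𝕜 E 𝓔 : Type*} [NontriviallyNormedField 𝕜]
  [NormedAddCommGroup E] [NormedSpace 𝕜 E] [NormedAddCommGroup 𝓔] [NormedSpace 𝕜 𝓔]

noncomputable def factorizedResolvent (J : E →L[𝕜] 𝓔) (𝓐 Rᵦ : 𝓔 →L[𝕜] 𝓔) (Rₗ : E →L[𝕜] E)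
    (T : 𝓔 →L[𝕜] E) (n : ℕ) : 𝓔 →L[𝕜] 𝓔 :=
  (∑ ℓ ∈ Finset.range n, ((-1 : 𝕜) ^ ℓ) • (Rᵦ.comp ((𝓐.comp Rᵦ) ^ ℓ)))
    + ((-1 : 𝕜) ^ n) • (J.comp (Rₗ.comp T))

theorem sub_smul_id_comp_factorizedResolvent {J : E →L[𝕜] 𝓔} {𝓐 𝓑 Rᵦ : 𝓔 →L[𝕜] 𝓔}
    {L Rₗ : E →L[𝕜] E} {T : 𝓔 →L[𝕜] E} {n : ℕ} {z : 𝕜} (hL : (𝓐 + 𝓑).comp J = J.comp L)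
    (hRᵦ : (𝓑 - z • ContinuousLinearMap.id 𝕜 𝓔).comp Rᵦ = ContinuousLinearMap.id 𝕜 𝓔)
    (hRₗ : (L - z • ContinuousLinearMap.id 𝕜 E).comp Rₗ = ContinuousLinearMap.id 𝕜 E)
    (hT : J.comp T = (𝓐.comp Rᵦ) ^ n) :
    ((𝓐 + 𝓑) - z • ContinuousLinearMap.id 𝕜 𝓔).comp (factorizedResolvent J 𝓐 Rᵦ Rₗ T n)
      = ContinuousLinearMap.id 𝕜 𝓔 := by
  have hJ : ((𝓐 + 𝓑) - z • ContinuousLinearMap.id 𝕜 𝓔).comp J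
      = J.comp (L - z • ContinuousLinearMap.id 𝕜 E) := by
    ext x
    simpa using congr($hL x)
  have hlast : ((𝓐 + 𝓑) - z • ContinuousLinearMap.id 𝕜 𝓔).comp (J.comp (Rₗ.comp T))
      = (𝓐.comp Rᵦ) ^ n := by
    rw [← ContinuousLinearMap.comp_assoc, hJ, ContinuousLinearMap.comp_assoc,
      ← ContinuousLinearMap.comp_assoc _ Rₗ, hRₗ, ContinuousLinearMap.id_comp, hT]
  rw [factorizedResolvent, ContinuousLinearMap.comp_add, ContinuousLinearMap.comp_smul, hlast]
  simp only [← ContinuousLinearMap.mul_def, ← ContinuousLinearMap.one_def] at hRᵦ ⊢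
  rw [add_sub_assoc, add_mul_sum_neg_one_pow_smul hRᵦ, sub_add_cancel]

theorem eventually_norm_factorizedResolvent_le {X : Type*} [TopologicalSpace X]
    (J : E →L[𝕜] 𝓔) (𝓐 : 𝓔 →L[𝕜] 𝓔) (n : ℕ) {Rᵦ : X → 𝓔 →L[𝕜] 𝓔} {Rₗ : X → E →L[𝕜] E}
    {T : X → 𝓔 →L[𝕜] E} {x : X} {C : ℝ} (hRᵦ : ContinuousAt Rᵦ x) (hRₗ : ContinuousAt Rₗ x)
    (hT : ∀ᶠ y in 𝓝 x, ‖T y‖ ≤ C) :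
    ∃ K, ∀ᶠ y in 𝓝 x, ‖factorizedResolvent J 𝓐 (Rᵦ y) (Rₗ y) (T y) n‖ ≤ K := by
  set P : X → 𝓔 →L[𝕜] 𝓔 := fun y ↦
    ∑ ℓ ∈ Finset.range n, ((-1 : 𝕜) ^ ℓ) • ((Rᵦ y).comp ((𝓐.comp (Rᵦ y)) ^ ℓ))
  have hP : ContinuousAt P x := by
    simp only [P, ← ContinuousLinearMap.mul_def]
    fun_prop
  have hC : 0 ≤ C := (norm_nonneg _).trans hT.self_of_nhds
  refine ⟨‖P x‖ + 1 + ‖J‖ * ((‖Rₗ x‖ + 1) * C), ?_⟩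
  filter_upwards [hP.norm.eventually_lt continuousAt_const (lt_add_one _),
    hRₗ.norm.eventually_lt continuousAt_const (lt_add_one _), hT] with y hPy hRy hTy
  calc ‖factorizedResolvent J 𝓐 (Rᵦ y) (Rₗ y) (T y) n‖
      ≤ ‖P y‖ + ‖J.comp ((Rₗ y).comp (T y))‖ := by
        refine (norm_add_le _ _).trans_eq ?_
        simp [P, norm_smul]
    _ ≤ ‖P x‖ + 1 + ‖J‖ * ((‖Rₗ x‖ + 1) * C) := by
        gcongr
        refine (ContinuousLinearMap.opNorm_comp_le _ _).trans ?_
        gcongr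
        exact (ContinuousLinearMap.opNorm_comp_le _ _).trans (by gcongr)

end Factorization

theorem resolvent_factorization_general
    {E 𝓔 : Type*}
    [NormedAddCommGroup E] [NormedSpace ℂ E] [CompleteSpace E]
    [NormedAddCommGroup 𝓔] [NormedSpace ℂ 𝓔] [CompleteSpace 𝓔]
    (J : E →L[ℂ] 𝓔)
    (𝓐 𝓑 : 𝓔 →L[ℂ] 𝓔) (L : E →L[ℂ] E)
    (hL : (𝓐 + 𝓑).comp J = J.comp L)
    (a : ℝ) (n : ℕ)
    -- (i) the resolvent of 𝓑 exists and is uniformly bounded on {Re z > a},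
    -- with norm tending to 0 as Re z → ∞
    (RB : ℂ → (𝓔 →L[ℂ] 𝓔))
    (hRB : ∀ z : ℂ, a < z.re →
      (𝓑 - z • ContinuousLinearMap.id ℂ 𝓔).comp (RB z) = ContinuousLinearMap.id ℂ 𝓔 ∧
      (RB z).comp (𝓑 - z • ContinuousLinearMap.id ℂ 𝓔) = ContinuousLinearMap.id ℂ 𝓔)
    (hRBto0 : Tendsto (fun z : ℂ => ‖RB z‖) (Filter.comap Complex.re atTop) (nhds 0))
    -- (iii) (𝓐 ∘ RB z)^n factors through E, uniformly boundedly
    (T : ℂ → (𝓔 →L[ℂ] E))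
    (hT : ∀ z : ℂ, a < z.re → J.comp (T z) = (𝓐.comp (RB z)) ^ n)
    (C' : ℝ) (hTbdd : ∀ z : ℂ, a < z.re → ‖T z‖ ≤ C')
    -- (iv) the resolvent of L exists and is bounded on E for Re z > a
    (RL : ℂ → (E →L[ℂ] E))
    (hRL : ∀ z : ℂ, a < z.re →
      (L - z • ContinuousLinearMap.id ℂ E).comp (RL z) = ContinuousLinearMap.id ℂ E ∧
      (RL z).comp (L - z • ContinuousLinearMap.id ℂ E) = ContinuousLinearMap.id ℂ E) :
    -- conclusion: (𝓛 - z) is invertible with the factorized inverse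
    ∀ z : ℂ, a < z.re →
      (((𝓐 + 𝓑) - z • ContinuousLinearMap.id ℂ 𝓔).comp
          ((∑ ℓ ∈ Finset.range n,
              ((-1 : ℂ) ^ ℓ) • ((RB z).comp ((𝓐.comp (RB z)) ^ ℓ)))
            + ((-1 : ℂ) ^ n) • (J.comp ((RL z).comp (T z))))
        = ContinuousLinearMap.id ℂ 𝓔) ∧
      (((∑ ℓ ∈ Finset.range n,
              ((-1 : ℂ) ^ ℓ) • ((RB z).comp ((𝓐.comp (RB z)) ^ ℓ)))
            + ((-1 : ℂ) ^ n) • (J.comp ((RL z).comp (T z)))).comp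
          ((𝓐 + 𝓑) - z • ContinuousLinearMap.id ℂ 𝓔)
        = ContinuousLinearMap.id ℂ 𝓔) := by
  set Ω : Set ℂ := {w | a < w.re}
  have hΩ : IsOpen Ω := isOpen_lt continuous_const Complex.continuous_re
  have hRBcont (w : ℂ) (hw : w ∈ Ω) : ContinuousAt RB w :=
    continuousAt_of_eventually_inverse (f := fun w ↦ 𝓑 - w • ContinuousLinearMap.id ℂ 𝓔)
      (by fun_prop) ((hΩ.eventually_mem hw).mono hRB)
  have hRLcont (w : ℂ) (hw : w ∈ Ω) : ContinuousAt RL w :=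
    continuousAt_of_eventually_inverse (f := fun w ↦ L - w • ContinuousLinearMap.id ℂ E)
      (by fun_prop) ((hΩ.eventually_mem hw).mono hRL)
  have hright (w : ℂ) (hw : w ∈ Ω) :=
    sub_smul_id_comp_factorizedResolvent hL (hRB w hw).1 (hRL w hw).1 (hT w hw)
  have hunit : ∀ w ∈ Ω, IsUnit ((𝓐 + 𝓑) - w • ContinuousLinearMap.id ℂ 𝓔) := by
    refine (convex_halfSpace_re_gt a).isPreconnected.isUnit_of_locally_bounded_right_inverse hΩ
      (by fun_prop) hright (fun w hw ↦ eventually_norm_factorizedResolvent_le J 𝓐 n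
        (hRBcont w hw) (hRLcont w hw) ((hΩ.eventually_mem hw).mono hTbdd)) ?_
    obtain ⟨w, hw, hwu⟩ := exists_lt_re_isUnit_add 𝓐 a hRB hRBto0
    exact ⟨w, hw, by rwa [add_sub_assoc]⟩
  intro z hz
  obtain ⟨u, hu⟩ := hunit z hz
  have hr := hright z hz
  rw [← hu] at hr ⊢
  exact ⟨hr, show factorizedResolvent J 𝓐 (RB z) (RL z) (T z) n * u = 1 by
    rw [← Units.mul_eq_one_iff_inv_eq.mp hr, u.inv_mul]⟩

theorem resolvent_factorization
    {E 𝓔 : Type*}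
    [NormedAddCommGroup E] [NormedSpace ℂ E] [CompleteSpace E]
    [NormedAddCommGroup 𝓔] [NormedSpace ℂ 𝓔] [CompleteSpace 𝓔]
    (J : E →L[ℂ] 𝓔) (hJinj : Function.Injective J) (hJdense : DenseRange J)
    (𝓐 𝓑 : 𝓔 →L[ℂ] 𝓔) (L : E →L[ℂ] E)
    (hL : (𝓐 + 𝓑).comp J = J.comp L)
    (a : ℝ) (n : ℕ) (hn : 1 ≤ n)
    -- (i) the resolvent of 𝓑 exists and is uniformly bounded on {Re z > a},
    -- with norm tending to 0 as Re z → ∞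
    (RB : ℂ → (𝓔 →L[ℂ] 𝓔))
    (hRB : ∀ z : ℂ, a < z.re →
      (𝓑 - z • ContinuousLinearMap.id ℂ 𝓔).comp (RB z) = ContinuousLinearMap.id ℂ 𝓔 ∧
      (RB z).comp (𝓑 - z • ContinuousLinearMap.id ℂ 𝓔) = ContinuousLinearMap.id ℂ 𝓔)
    (C : ℝ) (hRBbdd : ∀ z : ℂ, a < z.re → ‖RB z‖ ≤ C)
    (hRBto0 : Tendsto (fun z : ℂ => ‖RB z‖) (Filter.comap Complex.re atTop) (nhds 0))
    -- (iii) (𝓐 ∘ RB z)^n factors through E, uniformly boundedly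
    (T : ℂ → (𝓔 →L[ℂ] E))
    (hT : ∀ z : ℂ, a < z.re → J.comp (T z) = (𝓐.comp (RB z)) ^ n)
    (C' : ℝ) (hTbdd : ∀ z : ℂ, a < z.re → ‖T z‖ ≤ C')
    -- (iv) the resolvent of L exists and is bounded on E for Re z > a
    (RL : ℂ → (E →L[ℂ] E))
    (hRL : ∀ z : ℂ, a < z.re →
      (L - z • ContinuousLinearMap.id ℂ E).comp (RL z) = ContinuousLinearMap.id ℂ E ∧
      (RL z).comp (L - z • ContinuousLinearMap.id ℂ E) = ContinuousLinearMap.id ℂ E) :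
    -- conclusion: (𝓛 - z) is invertible with the factorized inverse
    ∀ z : ℂ, a < z.re →
      (((𝓐 + 𝓑) - z • ContinuousLinearMap.id ℂ 𝓔).comp
          ((∑ ℓ ∈ Finset.range n,
              ((-1 : ℂ) ^ ℓ) • ((RB z).comp ((𝓐.comp (RB z)) ^ ℓ)))
            + ((-1 : ℂ) ^ n) • (J.comp ((RL z).comp (T z))))
        = ContinuousLinearMap.id ℂ 𝓔) ∧
      (((∑ ℓ ∈ Finset.range n,
              ((-1 : ℂ) ^ ℓ) • ((RB z).comp ((𝓐.comp (RB z)) ^ ℓ)))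
            + ((-1 : ℂ) ^ n) • (J.comp ((RL z).comp (T z)))).comp
          ((𝓐 + 𝓑) - z • ContinuousLinearMap.id ℂ 𝓔)
        = ContinuousLinearMap.id ℂ 𝓔) :=
  resolvent_factorization_general J 𝓐 𝓑 L hL a n RB hRB hRBto0 T hT C' hTbdd RL hRL
end

section
/- Let 𝓛 = 𝓐 + 𝓑 be as above with assumptions (i)–(iv) of the factorization theorem, and suppose that in the second variant L - ξ is injective on E for some ξ with Re ξ > a. If f ∈ 𝓔 satisfies (𝓛 - ξ) f = 0, and if (𝓐(𝓑-ξ)^{-1})^n maps 𝓔 into E while (𝓑-ξ)^{-1} maps E into Dom(L) ⊂ E, then f = 0. In particular the null space of (𝓛 - ξ) in 𝓔 coincides with the null space of (L - ξ) in E. -/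
/-! With `f̄ = (𝓑 - ξ) f`, the equation `(𝓐 + 𝓑) f = ξ f` says `G f̄ = -f̄` for
`G = 𝓐 (𝓑 - ξ)⁻¹`, so `f̄ = (-1)ⁿ Gⁿ f̄` lies in `E`, hence so does `f = (𝓑 - ξ)⁻¹ f̄`,
and injectivity of `L - ξ` on `E` forces `f = 0`. -/

namespace ContinuousLinearMap

variable {R M N : Type*} [Ring R] [TopologicalSpace M] [AddCommGroup M] [Module R M]
  [TopologicalSpace N] [AddCommGroup N] [Module R N]

theorem pow_apply_of_apply_eq_neg {G : M →L[R] M} {x : M} (hx : G x = -x) (k : ℕ) :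
    (G ^ k) x = (-1 : R) ^ k • x := by
  induction k with
  | zero => simp
  | succ k ih =>
    rw [pow_succ, mul_apply_eq_comp, hx, map_neg, ih, pow_succ, mul_neg_one, neg_smul]

theorem exists_apply_eq_of_apply_eq_neg {J : N →L[R] M} {T : M →L[R] N} {G : M →L[R] M}
    {n : ℕ} (hT : J.comp T = G ^ n) {x : M} (hx : G x = -x) :
    ∃ y, J y = x := by
  refine ⟨(-1 : R) ^ n • T x, ?_⟩
  have hGn : (-1 : R) ^ n • (G ^ n) x = x := by
    rw [pow_apply_of_apply_eq_neg hx, smul_smul, ← pow_add, ← two_mul, pow_mul, neg_one_sq,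
      one_pow, one_smul]
  rw [map_smul, ← comp_apply, hT, hGn]

end ContinuousLinearMap

open ContinuousLinearMap in
theorem injectivity_transfer_general
    {E 𝓔 : Type*}
    [NormedAddCommGroup E] [NormedSpace ℂ E]
    [NormedAddCommGroup 𝓔] [NormedSpace ℂ 𝓔]
    (J : E →L[ℂ] 𝓔)
    (𝓐 𝓑 : 𝓔 →L[ℂ] 𝓔) (ξ : ℂ) (n : ℕ)
    (RB : 𝓔 →L[ℂ] 𝓔)
    (hRB2 : RB.comp (𝓑 - ξ • ContinuousLinearMap.id ℂ 𝓔) = ContinuousLinearMap.id ℂ 𝓔)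
    -- (𝓐 (𝓑 - ξ)⁻¹)ⁿ maps 𝓔 into E
    (T : 𝓔 →L[ℂ] E) (hT : J.comp T = (𝓐.comp RB) ^ n)
    -- (𝓑 - ξ)⁻¹ maps E into Dom(L) ⊂ E
    (hRBE : ∀ g : E, ∃ g' : E, RB (J g) = J g')
    -- L - ξ is injective on E
    (hLinj : ∀ g : E, (𝓐 + 𝓑) (J g) = ξ • (J g) → g = 0) :
    ∀ f : 𝓔, (𝓐 + 𝓑) f = ξ • f → f = 0 := by
  intro f hf
  set fb := (𝓑 - ξ • ContinuousLinearMap.id ℂ 𝓔) f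
  have hRBfb : RB fb = f := by rw [← comp_apply, hRB2, id_apply]
  have hGfb : (𝓐.comp RB) fb = -fb := by
    rw [comp_apply, hRBfb, eq_neg_iff_add_eq_zero]
    simp only [fb, sub_apply, smul_apply, id_apply, ← hf, add_apply]
    abel
  obtain ⟨g, hg⟩ := exists_apply_eq_of_apply_eq_neg hT hGfb
  obtain ⟨g', hg'⟩ := hRBE g
  have hfJ : f = J g' := by rw [← hRBfb, ← hg, hg']
  rw [hfJ, hLinj g' (hfJ ▸ hf), map_zero]

theorem injectivity_transfer
    {E 𝓔 : Type*}
    [NormedAddCommGroup E] [NormedSpace ℂ E] [CompleteSpace E]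
    [NormedAddCommGroup 𝓔] [NormedSpace ℂ 𝓔] [CompleteSpace 𝓔]
    (J : E →L[ℂ] 𝓔) (hJinj : Function.Injective J)
    (𝓐 𝓑 : 𝓔 →L[ℂ] 𝓔) (ξ : ℂ) (n : ℕ) (hn : 1 ≤ n)
    (RB : 𝓔 →L[ℂ] 𝓔)
    (hRB1 : (𝓑 - ξ • ContinuousLinearMap.id ℂ 𝓔).comp RB = ContinuousLinearMap.id ℂ 𝓔)
    (hRB2 : RB.comp (𝓑 - ξ • ContinuousLinearMap.id ℂ 𝓔) = ContinuousLinearMap.id ℂ 𝓔)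
    -- (𝓐 (𝓑 - ξ)⁻¹)ⁿ maps 𝓔 into E
    (T : 𝓔 →L[ℂ] E) (hT : J.comp T = (𝓐.comp RB) ^ n)
    -- (𝓑 - ξ)⁻¹ maps E into Dom(L) ⊂ E
    (hRBE : ∀ g : E, ∃ g' : E, RB (J g) = J g')
    -- L - ξ is injective on E
    (hLinj : ∀ g : E, (𝓐 + 𝓑) (J g) = ξ • (J g) → g = 0) :
    ∀ f : 𝓔, (𝓐 + 𝓑) f = ξ • f → f = 0 :=
  injectivity_transfer_general J 𝓐 𝓑 ξ n RB hRB2 T hT hRBE hLinj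
end
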